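/- For the optimal nuisance r* = argmax over r with I(r; x) > 0, I(r; y) = 0 of I(r; h), if y is a deterministic function of x, then the gap ε = λ₂[I(h; x) − I(h; y) − I(h; r*)] satisfies ε ≤ λ₂[I(x; y) − I(h; y)] for any λ₂ ≥ 0. -/

import Mathlib

open Finset

/-- Pushforward of a mass function `p` on a finite sample space along `f`. -/
noncomputable def pmap {Ω B : Type*} [Fintype Ω] [DecidableEq B] (p : Ω → ℝ) (f : Ω → B) : B → ℝ :=
  fun b => ∑ ω, if f ω = b then p ω else 0

/-- Shannon entropy of a mass function on a finite alphabet (natural log). -/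
noncomputable def ent {A : Type*} [Fintype A] (p : A → ℝ) : ℝ :=
  ∑ a, -(p a * Real.log (p a))

/-- Mutual information `I(f ; g)` of two discrete random variables `f, g` on (Ω, p). -/
noncomputable def MI {Ω A B : Type*} [Fintype Ω] [Fintype A] [Fintype B]
    [DecidableEq A] [DecidableEq B] (p : Ω → ℝ) (f : Ω → A) (g : Ω → B) : ℝ :=
  ent (pmap p f) + ent (pmap p g) - ent (pmap p (fun ω => (f ω, g ω)))

/-- Conditional entropy `H(f | g)`. -/
noncomputable def condEnt {Ω A B : Type*} [Fintype Ω] [Fintype A] [Fintype B]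
    [DecidableEq A] [DecidableEq B] (p : Ω → ℝ) (f : Ω → A) (g : Ω → B) : ℝ :=
  ent (pmap p (fun ω => (f ω, g ω))) - ent (pmap p g)

/-- Conditional mutual information `I(f ; g | k) = H(g | k) - H(g | f, k)`. -/
noncomputable def condMI {Ω A B C : Type*} [Fintype Ω] [Fintype A] [Fintype B] [Fintype C]
    [DecidableEq A] [DecidableEq B] [DecidableEq C]
    (p : Ω → ℝ) (f : Ω → A) (g : Ω → B) (k : Ω → C) : ℝ :=
  condEnt p g k - condEnt p g (fun ω => (f ω, k ω))

/-- `p` is a probability mass function. -/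
def IsPMF {Ω : Type*} [Fintype Ω] (p : Ω → ℝ) : Prop :=
  (∀ ω, 0 ≤ p ω) ∧ ∑ ω, p ω = 1

/-- Conditional independence of `f` and `g` given `k` under `p`
(the Markov chain `f → k → g`). -/
def CondIndep {Ω A B C : Type*} [Fintype Ω] [DecidableEq A] [DecidableEq B] [DecidableEq C]
    (p : Ω → ℝ) (f : Ω → A) (g : Ω → B) (k : Ω → C) : Prop :=
  ∀ a b c, pmap p (fun ω => (f ω, g ω, k ω)) (a, b, c) * pmap p k c =
    pmap p (fun ω => (f ω, k ω)) (a, c) * pmap p (fun ω => (g ω, k ω)) (b, c)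

/-- Independence of `f` and `g` under `p`. -/
def Indep {Ω A B : Type*} [Fintype Ω] [DecidableEq A] [DecidableEq B]
    (p : Ω → ℝ) (f : Ω → A) (g : Ω → B) : Prop :=
  ∀ a b, pmap p (fun ω => (f ω, g ω)) (a, b) = pmap p f a * pmap p g b

set_option linter.unusedSectionVars false

section Aux
variable {Ω Ω' A B C : Type*} [Fintype Ω] [Fintype Ω'] [Fintype A] [Fintype B] [Fintype C]
  [DecidableEq A] [DecidableEq B] [DecidableEq C]

theorem pmap_nonneg {p : Ω → ℝ} (hp : ∀ ω, 0 ≤ p ω) (f : Ω → A) (a : A) :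
    0 ≤ pmap p f a := by
  unfold pmap
  apply Finset.sum_nonneg
  intro ω _
  split <;> simp [hp ω]

theorem pmap_total {p : Ω → ℝ} (f : Ω → A) : ∑ a, pmap p f a = ∑ ω, p ω := by
  unfold pmap
  rw [Finset.sum_comm]
  refine Finset.sum_congr rfl fun ω _ => ?_
  simp [Finset.sum_ite_eq]

theorem pmap_comp {p : Ω → ℝ} (f : Ω → A) (u : A → B) :
    pmap (pmap p f) u = pmap p (fun ω => u (f ω)) := by
  funext b
  unfold pmap
  calc (∑ a, if u a = b then ∑ ω, if f ω = a then p ω else 0 else 0)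
      = ∑ a, ∑ ω, if u a = b then (if f ω = a then p ω else 0) else 0 := by
        refine Finset.sum_congr rfl fun a _ => ?_
        by_cases h : u a = b <;> simp [h]
    _ = ∑ ω, ∑ a, if u a = b then (if f ω = a then p ω else 0) else 0 :=
        Finset.sum_comm
    _ = ∑ ω, if u (f ω) = b then p ω else 0 := by
        refine Finset.sum_congr rfl fun ω _ => ?_
        rw [Finset.sum_eq_single (f ω)]
        · simp
        · intro a _ ha
          simp [Ne.symm ha]
        · simp

theorem pmap_congr {p : Ω → ℝ} {f g : Ω → A} (h : ∀ ω, p ω ≠ 0 → f ω = g ω) :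
    pmap p f = pmap p g := by
  funext a
  unfold pmap
  refine Finset.sum_congr rfl fun ω _ => ?_
  by_cases hp : p ω = 0
  · simp [hp]
  · rw [h ω hp]

theorem exists_of_pmap_ne_zero {p : Ω → ℝ} {f : Ω → A} {a : A} (h : pmap p f a ≠ 0) :
    ∃ ω, p ω ≠ 0 ∧ f ω = a := by
  obtain ⟨ω, -, hω⟩ := Finset.exists_ne_zero_of_sum_ne_zero h
  by_cases hfa : f ω = a
  · exact ⟨ω, by simpa [hfa] using hω, hfa⟩
  · simp [hfa] at hω

theorem ent_pmap_of_injOn {q : A → ℝ} {u : A → B}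
    (h : ∀ a b, q a ≠ 0 → q b ≠ 0 → u a = u b → a = b) :
    ent (pmap q u) = ent q := by
  unfold ent pmap
  have key : ∀ b : B, -((∑ a, if u a = b then q a else 0) *
      Real.log (∑ a, if u a = b then q a else 0)) =
      ∑ a, if u a = b then -(q a * Real.log (q a)) else 0 := by
    intro b
    by_cases hex : ∃ a₀, (u a₀ = b ∧ q a₀ ≠ 0)
    · obtain ⟨a₀, ha₀, hq₀⟩ := hex
      have h1 : (∑ a, if u a = b then q a else 0) = q a₀ := by
        rw [Finset.sum_eq_single a₀]
        · simp [ha₀]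
        · intro a _ hne
          split
          · rename_i hub
            by_contra hqa
            exact hne (h a a₀ hqa hq₀ (hub.trans ha₀.symm))
          · rfl
        · simp
      have h2 : (∑ a, if u a = b then -(q a * Real.log (q a)) else 0) =
          -(q a₀ * Real.log (q a₀)) := by
        rw [Finset.sum_eq_single a₀]
        · simp [ha₀]
        · intro a _ hne
          split
          · rename_i hub
            by_cases hqa : q a = 0
            · simp [hqa]
            · exact absurd (h a a₀ hqa hq₀ (hub.trans ha₀.symm)) hne
          · rfl
        · simp
      rw [h1, h2]
    · push_neg at hex
      have h1 : (∑ a, if u a = b then q a else 0) = 0 := by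
        apply Finset.sum_eq_zero
        intro a _
        split
        · exact hex a ‹_›
        · rfl
      have h2 : (∑ a, if u a = b then -(q a * Real.log (q a)) else 0) = 0 := by
        apply Finset.sum_eq_zero
        intro a _
        split
        · simp [hex a ‹_›]
        · rfl
      rw [h1, h2]
      simp
  calc (∑ b, -((∑ a, if u a = b then q a else 0) *
        Real.log (∑ a, if u a = b then q a else 0)))
      = ∑ b, ∑ a, if u a = b then -(q a * Real.log (q a)) else 0 :=
        Finset.sum_congr rfl fun b _ => key b
    _ = ∑ a, -(q a * Real.log (q a)) := by
        rw [Finset.sum_comm]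
        refine Finset.sum_congr rfl fun a _ => ?_
        simp [Finset.sum_ite_eq]

theorem ent_pmap_eq {p : Ω → ℝ} {f : Ω → A} {g : Ω → B} (u : A → B) (v : B → A)
    (hu : ∀ ω, p ω ≠ 0 → g ω = u (f ω)) (hv : ∀ ω, p ω ≠ 0 → f ω = v (g ω)) :
    ent (pmap p f) = ent (pmap p g) := by
  have h1 : pmap p g = pmap p (fun ω => u (f ω)) := pmap_congr hu
  rw [h1, ← pmap_comp f u]
  refine (ent_pmap_of_injOn ?_).symm
  intro a b ha hb hab
  obtain ⟨ω, hω, hfa⟩ := exists_of_pmap_ne_zero ha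
  obtain ⟨ω', hω', hfb⟩ := exists_of_pmap_ne_zero hb
  have : a = v (u a) := by rw [← hfa, ← hu ω hω, ← hv ω hω]
  have hb' : b = v (u b) := by rw [← hfb, ← hu ω' hω', ← hv ω' hω']
  rw [this, hb', hab]

end Aux
section Gibbs
variable {Ω A B C : Type*} [Fintype Ω] [Fintype A] [Fintype B] [Fintype C]
  [DecidableEq A] [DecidableEq B] [DecidableEq C]

/-- Entropy of a pushforward as a sum over the sample space. -/
theorem ent_pmap_eq_sum {p : Ω → ℝ} (f : Ω → A) :
    ent (pmap p f) = ∑ ω, -(p ω * Real.log (pmap p f (f ω))) := by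
  unfold ent
  have hpm : ∀ a : A, pmap p f a * Real.log (pmap p f a) =
      ∑ ω, (if f ω = a then p ω * Real.log (pmap p f a) else 0) := by
    intro a
    have hh : pmap p f a = ∑ ω, (if f ω = a then p ω else 0) := rfl
    rw [hh, Finset.sum_mul]
    refine Finset.sum_congr rfl fun ω _ => ?_
    split <;> simp
  calc (∑ a, -(pmap p f a * Real.log (pmap p f a)))
      = ∑ a, ∑ ω, (if f ω = a then -(p ω * Real.log (pmap p f a)) else 0) := by
        refine Finset.sum_congr rfl fun a _ => ?_
        rw [hpm a, ← Finset.sum_neg_distrib]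
        refine Finset.sum_congr rfl fun ω _ => ?_
        split <;> simp
    _ = ∑ ω, ∑ a, (if f ω = a then -(p ω * Real.log (pmap p f a)) else 0) :=
        Finset.sum_comm
    _ = ∑ ω, -(p ω * Real.log (pmap p f (f ω))) := by
        refine Finset.sum_congr rfl fun ω _ => ?_
        simp [Finset.sum_ite_eq]

/-- Regrouping a sum over the sample space by the value of `f`. -/
theorem sum_mul_comp {p : Ω → ℝ} (f : Ω → A) (G : A → ℝ) :
    ∑ ω, p ω * G (f ω) = ∑ a, pmap p f a * G a := by
  unfold pmap
  calc (∑ ω, p ω * G (f ω))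
      = ∑ ω, ∑ a, (if f ω = a then p ω * G a else 0) := by
        refine Finset.sum_congr rfl fun ω _ => ?_
        simp [Finset.sum_ite_eq]
    _ = ∑ a, ∑ ω, (if f ω = a then p ω * G a else 0) := Finset.sum_comm
    _ = ∑ a, (∑ ω, if f ω = a then p ω else 0) * G a := by
        refine Finset.sum_congr rfl fun a _ => ?_
        rw [Finset.sum_mul]
        refine Finset.sum_congr rfl fun ω _ => ?_
        split <;> simp

theorem le_pmap_apply {p : Ω → ℝ} (hp : ∀ ω, 0 ≤ p ω) (f : Ω → A) (ω : Ω) :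
    p ω ≤ pmap p f (f ω) := by
  unfold pmap
  have := Finset.single_le_sum (f := fun ω' => if f ω' = f ω then p ω' else 0)
    (fun ω' _ => by split <;> simp [hp ω']) (Finset.mem_univ ω)
  simpa using this

theorem pmap_pair_fst {p : Ω → ℝ} (f : Ω → A) (g : Ω → B) (a : A) :
    pmap p f a = ∑ b, pmap p (fun ω => (f ω, g ω)) (a, b) := by
  unfold pmap
  rw [Finset.sum_comm]
  refine Finset.sum_congr rfl fun ω _ => ?_
  by_cases h : f ω = a
  · rw [Finset.sum_eq_single (g ω)] <;> simp [h]
    intro b hb; simp [Ne.symm hb]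
  · simp [h, Prod.ext_iff]

theorem pmap_pair_snd {p : Ω → ℝ} (f : Ω → A) (g : Ω → B) (b : B) :
    pmap p g b = ∑ a, pmap p (fun ω => (f ω, g ω)) (a, b) := by
  unfold pmap
  rw [Finset.sum_comm]
  refine Finset.sum_congr rfl fun ω _ => ?_
  by_cases h : g ω = b
  · rw [Finset.sum_eq_single (f ω)] <;> simp [h]
    intro a ha; simp [Ne.symm ha]
  · simp [h, Prod.ext_iff]

/-- `MI` as a single sum over value pairs. -/
theorem mi_eq_sum {p : Ω → ℝ} (f : Ω → A) (g : Ω → B) :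
    MI p f g = ∑ x : A × B, pmap p (fun ω => (f ω, g ω)) x *
      (Real.log (pmap p (fun ω => (f ω, g ω)) x) -
       Real.log (pmap p f x.1) - Real.log (pmap p g x.2)) := by
  unfold MI
  rw [ent_pmap_eq_sum f, ent_pmap_eq_sum g, ent_pmap_eq_sum (fun ω => (f ω, g ω))]
  rw [show ∀ (F : Ω → ℝ) (G : Ω → ℝ) (Hh : Ω → ℝ), (∑ ω, F ω) + (∑ ω, G ω) - (∑ ω, Hh ω)
      = ∑ ω, (F ω + G ω - Hh ω) from fun F G Hh => by
    rw [← Finset.sum_add_distrib, ← Finset.sum_sub_distrib]]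
  rw [show (∑ x : A × B, pmap p (fun ω => (f ω, g ω)) x *
      (Real.log (pmap p (fun ω => (f ω, g ω)) x) -
       Real.log (pmap p f x.1) - Real.log (pmap p g x.2))) =
      ∑ ω, p ω * (Real.log (pmap p (fun ω => (f ω, g ω)) (f ω, g ω)) -
       Real.log (pmap p f (f ω)) - Real.log (pmap p g (g ω))) from
    (sum_mul_comp (fun ω => (f ω, g ω)) (fun x => Real.log (pmap p (fun ω => (f ω, g ω)) x) -
       Real.log (pmap p f x.1) - Real.log (pmap p g x.2))).symm]
  refine Finset.sum_congr rfl fun ω _ => ?_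
  ring

theorem mi_ge_term {p : Ω → ℝ} (hp : IsPMF p) (f : Ω → A) (g : Ω → B) (x : A × B) :
    pmap p (fun ω => (f ω, g ω)) x - pmap p f x.1 * pmap p g x.2 ≤
    pmap p (fun ω => (f ω, g ω)) x *
      (Real.log (pmap p (fun ω => (f ω, g ω)) x) -
       Real.log (pmap p f x.1) - Real.log (pmap p g x.2)) := by
  set m := pmap p (fun ω => (f ω, g ω)) x with hm
  set μ := pmap p f x.1 with hμ
  set ν := pmap p g x.2 with hν
  have hm0 : 0 ≤ m := pmap_nonneg hp.1 _ _
  have hμ0 : 0 ≤ μ := pmap_nonneg hp.1 _ _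
  have hν0 : 0 ≤ ν := pmap_nonneg hp.1 _ _
  rcases eq_or_lt_of_le hm0 with h | h
  · simp [← h]; positivity
  · have hμm : m ≤ μ := by
      rw [hμ, pmap_pair_fst f g]
      have : x = (x.1, x.2) := rfl
      calc m ≤ ∑ b, pmap p (fun ω => (f ω, g ω)) (x.1, b) := by
            refine Finset.single_le_sum (fun b _ => pmap_nonneg hp.1 _ _) (Finset.mem_univ x.2)
            |>.trans_eq' (by rw [hm, ← this])
        _ = _ := rfl
    have hνm : m ≤ ν := by
      rw [hν, pmap_pair_snd f g]
      have : x = (x.1, x.2) := rfl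
      calc m ≤ ∑ a, pmap p (fun ω => (f ω, g ω)) (a, x.2) := by
            refine Finset.single_le_sum (fun a _ => pmap_nonneg hp.1 _ _) (Finset.mem_univ x.1)
            |>.trans_eq' (by rw [hm, ← this])
        _ = _ := rfl
    have hμp : 0 < μ := lt_of_lt_of_le h hμm
    have hνp : 0 < ν := lt_of_lt_of_le h hνm
    have hlog : Real.log (μ * ν / m) ≤ μ * ν / m - 1 :=
      Real.log_le_sub_one_of_pos (by positivity)
    rw [Real.log_div (by positivity) (ne_of_gt h), Real.log_mul (ne_of_gt hμp) (ne_of_gt hνp)]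
      at hlog
    have hfield : m * (μ * ν / m) = μ * ν := by field_simp
    nlinarith [hlog, h]

theorem sum_prod_marg {p : Ω → ℝ} (hp : IsPMF p) (f : Ω → A) (g : Ω → B) :
    ∑ x : A × B, pmap p f x.1 * pmap p g x.2 = 1 := by
  rw [Fintype.sum_prod_type]
  have h1 : ∑ a, pmap p f a = 1 := by rw [pmap_total, hp.2]
  have h2 : ∑ b, pmap p g b = 1 := by rw [pmap_total, hp.2]
  calc (∑ a, ∑ b, pmap p f a * pmap p g b)
      = ∑ a, pmap p f a * ∑ b, pmap p g b := by
        refine Finset.sum_congr rfl fun a _ => ?_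
        rw [Finset.mul_sum]
    _ = 1 := by rw [h2]; simp [h1]

theorem sum_joint {p : Ω → ℝ} (hp : IsPMF p) (f : Ω → A) (g : Ω → B) :
    ∑ x : A × B, pmap p (fun ω => (f ω, g ω)) x = 1 := by
  rw [pmap_total, hp.2]

theorem mi_nonneg {p : Ω → ℝ} (hp : IsPMF p) (f : Ω → A) (g : Ω → B) :
    0 ≤ MI p f g := by
  rw [mi_eq_sum]
  have : (0:ℝ) = ∑ x : A × B, (pmap p (fun ω => (f ω, g ω)) x - pmap p f x.1 * pmap p g x.2) := by
    rw [Finset.sum_sub_distrib, sum_joint hp, sum_prod_marg hp]; ring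
  rw [this]
  exact Finset.sum_le_sum fun x _ => mi_ge_term hp f g x

theorem indep_of_mi_eq_zero {p : Ω → ℝ} (hp : IsPMF p) {f : Ω → A} {g : Ω → B}
    (h : MI p f g = 0) : Indep p f g := by
  have hsum : ∑ x : A × B, (pmap p (fun ω => (f ω, g ω)) x *
      (Real.log (pmap p (fun ω => (f ω, g ω)) x) -
       Real.log (pmap p f x.1) - Real.log (pmap p g x.2)) -
      (pmap p (fun ω => (f ω, g ω)) x - pmap p f x.1 * pmap p g x.2)) = 0 := by
    rw [Finset.sum_sub_distrib, ← mi_eq_sum, h, Finset.sum_sub_distrib,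
      sum_joint hp, sum_prod_marg hp]
    ring
  have hterm := (Finset.sum_eq_zero_iff_of_nonneg
    (fun x _ => sub_nonneg.mpr (mi_ge_term hp f g x))).mp hsum
  intro a b
  have hx := hterm (a, b) (Finset.mem_univ _)
  rw [sub_eq_zero] at hx
  set m := pmap p (fun ω => (f ω, g ω)) (a, b) with hm
  set μ := pmap p f a with hμ
  set ν := pmap p g b with hν
  have hm0 : 0 ≤ m := pmap_nonneg hp.1 _ _
  rcases eq_or_lt_of_le hm0 with hc | hc
  · simp only [← hc] at hx ⊢
    simp at hx
    rcases hx with h0 | h0 <;> simp [h0]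
  · by_contra hne
    have hμp : 0 < μ := lt_of_lt_of_le hc (by
      rw [hμ, pmap_pair_fst f g]
      exact Finset.single_le_sum (f := fun b' => pmap p (fun ω => (f ω, g ω)) (a, b'))
        (fun b' _ => pmap_nonneg hp.1 _ _) (Finset.mem_univ b))
    have hνp : 0 < ν := lt_of_lt_of_le hc (by
      rw [hν, pmap_pair_snd f g]
      exact Finset.single_le_sum (f := fun a' => pmap p (fun ω => (f ω, g ω)) (a', b))
        (fun a' _ => pmap_nonneg hp.1 _ _) (Finset.mem_univ a))
    have hne1 : μ * ν / m ≠ 1 := by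
      intro h1
      apply hne
      field_simp at h1
      linarith [h1]
    have hlog : Real.log (μ * ν / m) < μ * ν / m - 1 :=
      Real.log_lt_sub_one_of_pos (by positivity) hne1
    rw [Real.log_div (by positivity) (ne_of_gt hc), Real.log_mul (ne_of_gt hμp) (ne_of_gt hνp)]
      at hlog
    have hfield : m * (μ * ν / m) = μ * ν := by field_simp
    nlinarith [hlog, hc]

end Gibbs
section Gibbs3
variable {Ω A B C : Type*} [Fintype Ω] [Fintype A] [Fintype B] [Fintype C]
  [DecidableEq A] [DecidableEq B] [DecidableEq C]

theorem pmap_le_pmap {p : Ω → ℝ} (hp : ∀ ω, 0 ≤ p ω) (f' : Ω → A) (u : A → B) (a : A) :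
    pmap p f' a ≤ pmap p (fun ω => u (f' ω)) (u a) := by
  unfold pmap
  apply Finset.sum_le_sum
  intro ω _
  by_cases h : f' ω = a
  · simp [h]
  · simp only [h, if_false]
    split <;> simp [hp ω]

theorem pmap_perm {p : Ω → ℝ} (f : Ω → A) (g : Ω → B) (k : Ω → C) (a : A) (b : B) (c : C) :
    pmap p (fun ω => (g ω, (f ω, k ω))) (b, (a, c)) =
    pmap p (fun ω => (f ω, g ω, k ω)) (a, b, c) := by
  unfold pmap
  refine Finset.sum_congr rfl fun ω _ => ?_
  refine if_congr ?_ rfl rfl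
  simp only [Prod.mk.injEq]
  tauto

theorem condEnt_nonneg {p : Ω → ℝ} (hp : IsPMF p) (f : Ω → A) (g : Ω → B) :
    0 ≤ condEnt p f g := by
  unfold condEnt
  rw [ent_pmap_eq_sum (fun ω => (f ω, g ω)), ent_pmap_eq_sum g, ← Finset.sum_sub_distrib]
  apply Finset.sum_nonneg
  intro ω _
  rcases eq_or_lt_of_le (hp.1 ω) with h0 | h0
  · rw [← h0]; simp
  · have h1 : p ω ≤ pmap p (fun ω => (f ω, g ω)) (f ω, g ω) := le_pmap_apply hp.1 _ ω
    have h2 : pmap p (fun ω => (f ω, g ω)) (f ω, g ω) ≤ pmap p g (g ω) :=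
      pmap_le_pmap hp.1 (fun ω => (f ω, g ω)) (fun x => x.2) (f ω, g ω)
    have hlog : Real.log (pmap p (fun ω => (f ω, g ω)) (f ω, g ω)) ≤
        Real.log (pmap p g (g ω)) := Real.log_le_log (lt_of_lt_of_le h0 h1) h2
    nlinarith [mul_le_mul_of_nonneg_left hlog (le_of_lt h0)]

theorem ent_prod {μ : A → ℝ} {ν : B → ℝ}
    (hμ1 : ∑ a, μ a = 1) (hν1 : ∑ b, ν b = 1) :
    ent (fun x : A × B => μ x.1 * ν x.2) = ent μ + ent ν := by
  unfold ent
  have key : ∀ a b, -(μ a * ν b * Real.log (μ a * ν b)) =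
      ν b * -(μ a * Real.log (μ a)) + μ a * -(ν b * Real.log (ν b)) := by
    intro a b
    by_cases h1 : μ a = 0
    · simp [h1]
    by_cases h2 : ν b = 0
    · simp [h2]
    rw [Real.log_mul h1 h2]; ring
  calc (∑ x : A × B, -(μ x.1 * ν x.2 * Real.log (μ x.1 * ν x.2)))
      = ∑ a, ∑ b, -(μ a * ν b * Real.log (μ a * ν b)) := by rw [Fintype.sum_prod_type]
    _ = ∑ a, ∑ b, (ν b * -(μ a * Real.log (μ a)) + μ a * -(ν b * Real.log (ν b))) :=
        Finset.sum_congr rfl fun a _ => Finset.sum_congr rfl fun b _ => key a b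
    _ = ∑ a, ((∑ b, ν b) * -(μ a * Real.log (μ a)) + μ a * ∑ b, -(ν b * Real.log (ν b))) := by
        refine Finset.sum_congr rfl fun a _ => ?_
        rw [Finset.sum_add_distrib, ← Finset.sum_mul, ← Finset.mul_sum]
    _ = (∑ a, -(μ a * Real.log (μ a))) + (∑ b, -(ν b * Real.log (ν b))) := by
        rw [hν1, Finset.sum_add_distrib, ← Finset.sum_mul, hμ1]
        simp

theorem condMI_repr {p : Ω → ℝ} (f : Ω → A) (g : Ω → B) (k : Ω → C) :
    condMI p f g k = ∑ ω, p ω *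
      (Real.log (pmap p (fun ω => (f ω, g ω, k ω)) (f ω, g ω, k ω)) +
       Real.log (pmap p k (k ω)) -
       Real.log (pmap p (fun ω => (g ω, k ω)) (g ω, k ω)) -
       Real.log (pmap p (fun ω => (f ω, k ω)) (f ω, k ω))) := by
  unfold condMI condEnt
  rw [ent_pmap_eq_sum (fun ω => (g ω, k ω)), ent_pmap_eq_sum k,
    ent_pmap_eq_sum (fun ω => (g ω, (f ω, k ω))), ent_pmap_eq_sum (fun ω => (f ω, k ω)),
    ← Finset.sum_sub_distrib, ← Finset.sum_sub_distrib, ← Finset.sum_sub_distrib]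
  refine Finset.sum_congr rfl fun ω _ => ?_
  rw [pmap_perm f g k (f ω) (g ω) (k ω)]
  ring

theorem condMI_nonneg {p : Ω → ℝ} (hp : IsPMF p) (f : Ω → A) (g : Ω → B) (k : Ω → C) :
    0 ≤ condMI p f g k := by
  rw [condMI_repr f g k]
  have key : ∀ ω, p ω - p ω *
      (pmap p (fun ω => (g ω, k ω)) (g ω, k ω) * pmap p (fun ω => (f ω, k ω)) (f ω, k ω) /
        (pmap p k (k ω) * pmap p (fun ω => (f ω, g ω, k ω)) (f ω, g ω, k ω))) ≤
      p ω * (Real.log (pmap p (fun ω => (f ω, g ω, k ω)) (f ω, g ω, k ω)) +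
       Real.log (pmap p k (k ω)) -
       Real.log (pmap p (fun ω => (g ω, k ω)) (g ω, k ω)) -
       Real.log (pmap p (fun ω => (f ω, k ω)) (f ω, k ω))) := by
    intro ω
    rcases eq_or_lt_of_le (hp.1 ω) with h0 | h0
    · rw [← h0]; simp
    · have hM : 0 < pmap p (fun ω => (f ω, g ω, k ω)) (f ω, g ω, k ω) :=
        lt_of_lt_of_le h0 (le_pmap_apply hp.1 _ ω)
      have hK : 0 < pmap p k (k ω) := lt_of_lt_of_le h0 (le_pmap_apply hp.1 _ ω)
      have hGK : 0 < pmap p (fun ω => (g ω, k ω)) (g ω, k ω) :=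
        lt_of_lt_of_le h0 (le_pmap_apply hp.1 _ ω)
      have hFK : 0 < pmap p (fun ω => (f ω, k ω)) (f ω, k ω) :=
        lt_of_lt_of_le h0 (le_pmap_apply hp.1 _ ω)
      set M := pmap p (fun ω => (f ω, g ω, k ω)) (f ω, g ω, k ω)
      set Kk := pmap p k (k ω)
      set GK := pmap p (fun ω => (g ω, k ω)) (g ω, k ω)
      set FK := pmap p (fun ω => (f ω, k ω)) (f ω, k ω)
      have hlog : Real.log (GK * FK / (Kk * M)) ≤ GK * FK / (Kk * M) - 1 :=
        Real.log_le_sub_one_of_pos (by positivity)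
      rw [Real.log_div (by positivity) (by positivity),
        Real.log_mul (ne_of_gt hGK) (ne_of_gt hFK),
        Real.log_mul (ne_of_gt hK) (ne_of_gt hM)] at hlog
      have h2 : 1 - GK * FK / (Kk * M) ≤
          Real.log M + Real.log Kk - Real.log GK - Real.log FK := by linarith
      calc p ω - p ω * (GK * FK / (Kk * M)) = p ω * (1 - GK * FK / (Kk * M)) := by ring
        _ ≤ p ω * (Real.log M + Real.log Kk - Real.log GK - Real.log FK) :=
            mul_le_mul_of_nonneg_left h2 (le_of_lt h0)
  have hsum1 : ∑ ω, p ω *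
      (pmap p (fun ω => (g ω, k ω)) (g ω, k ω) * pmap p (fun ω => (f ω, k ω)) (f ω, k ω) /
        (pmap p k (k ω) * pmap p (fun ω => (f ω, g ω, k ω)) (f ω, g ω, k ω))) ≤ 1 := by
    have e1 : ∑ ω, p ω *
        (pmap p (fun ω => (g ω, k ω)) (g ω, k ω) * pmap p (fun ω => (f ω, k ω)) (f ω, k ω) /
          (pmap p k (k ω) * pmap p (fun ω => (f ω, g ω, k ω)) (f ω, g ω, k ω))) =
        ∑ x : A × B × C, pmap p (fun ω => (f ω, g ω, k ω)) x *
        (pmap p (fun ω => (g ω, k ω)) (x.2.1, x.2.2) * pmap p (fun ω => (f ω, k ω)) (x.1, x.2.2) /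
          (pmap p k x.2.2 * pmap p (fun ω => (f ω, g ω, k ω)) x)) :=
      sum_mul_comp (fun ω => (f ω, g ω, k ω))
        (fun x => pmap p (fun ω => (g ω, k ω)) (x.2.1, x.2.2) *
          pmap p (fun ω => (f ω, k ω)) (x.1, x.2.2) /
          (pmap p k x.2.2 * pmap p (fun ω => (f ω, g ω, k ω)) x))
    rw [e1]
    have e2 : ∀ x : A × B × C, pmap p (fun ω => (f ω, g ω, k ω)) x *
        (pmap p (fun ω => (g ω, k ω)) (x.2.1, x.2.2) * pmap p (fun ω => (f ω, k ω)) (x.1, x.2.2) /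
          (pmap p k x.2.2 * pmap p (fun ω => (f ω, g ω, k ω)) x)) ≤
        pmap p (fun ω => (g ω, k ω)) (x.2.1, x.2.2) * pmap p (fun ω => (f ω, k ω)) (x.1, x.2.2) /
          pmap p k x.2.2 := by
      intro x
      have hM0 : 0 ≤ pmap p (fun ω => (f ω, g ω, k ω)) x := pmap_nonneg hp.1 _ _
      rcases eq_or_lt_of_le hM0 with h0 | h0
      · rw [← h0, zero_mul]
        exact div_nonneg (mul_nonneg (pmap_nonneg hp.1 _ _) (pmap_nonneg hp.1 _ _))
          (pmap_nonneg hp.1 _ _)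
      · have hK : 0 < pmap p k x.2.2 :=
          lt_of_lt_of_le h0 (pmap_le_pmap hp.1 (fun ω => (f ω, g ω, k ω)) (fun y => y.2.2) x)
        have h0' := ne_of_gt h0
        have hK' := ne_of_gt hK
        rw [show pmap p (fun ω => (f ω, g ω, k ω)) x *
          (pmap p (fun ω => (g ω, k ω)) (x.2.1, x.2.2) * pmap p (fun ω => (f ω, k ω)) (x.1, x.2.2) /
            (pmap p k x.2.2 * pmap p (fun ω => (f ω, g ω, k ω)) x)) =
          pmap p (fun ω => (g ω, k ω)) (x.2.1, x.2.2) * pmap p (fun ω => (f ω, k ω)) (x.1, x.2.2) /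
            pmap p k x.2.2 from by field_simp]
    refine le_trans (Finset.sum_le_sum fun x _ => e2 x) ?_
    have e3 : (∑ x : A × B × C,
        pmap p (fun ω => (g ω, k ω)) (x.2.1, x.2.2) * pmap p (fun ω => (f ω, k ω)) (x.1, x.2.2) /
          pmap p k x.2.2) =
        ∑ c, (∑ b, pmap p (fun ω => (g ω, k ω)) (b, c)) *
          ((∑ a, pmap p (fun ω => (f ω, k ω)) (a, c)) / pmap p k c) := by
      have s1 : (∑ x : A × B × C,
          pmap p (fun ω => (g ω, k ω)) (x.2.1, x.2.2) * pmap p (fun ω => (f ω, k ω)) (x.1, x.2.2) /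
            pmap p k x.2.2) =
          ∑ a, ∑ y : B × C,
            pmap p (fun ω => (g ω, k ω)) (y.1, y.2) * pmap p (fun ω => (f ω, k ω)) (a, y.2) /
              pmap p k y.2 := by rw [Fintype.sum_prod_type]
      have s2 : ∀ a : A, (∑ y : B × C,
          pmap p (fun ω => (g ω, k ω)) (y.1, y.2) * pmap p (fun ω => (f ω, k ω)) (a, y.2) /
            pmap p k y.2) =
          ∑ b, ∑ c, pmap p (fun ω => (g ω, k ω)) (b, c) * pmap p (fun ω => (f ω, k ω)) (a, c) /
            pmap p k c := fun a => by rw [Fintype.sum_prod_type]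
      rw [s1]
      calc (∑ a, ∑ y : B × C,
            pmap p (fun ω => (g ω, k ω)) (y.1, y.2) * pmap p (fun ω => (f ω, k ω)) (a, y.2) /
              pmap p k y.2)
          = ∑ a, ∑ b, ∑ c, pmap p (fun ω => (g ω, k ω)) (b, c) *
              pmap p (fun ω => (f ω, k ω)) (a, c) / pmap p k c :=
            Finset.sum_congr rfl fun a _ => s2 a
        _ = ∑ a, ∑ c, ∑ b, pmap p (fun ω => (g ω, k ω)) (b, c) *
              pmap p (fun ω => (f ω, k ω)) (a, c) / pmap p k c :=
            Finset.sum_congr rfl fun a _ => Finset.sum_comm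
        _ = ∑ c, ∑ a, ∑ b, pmap p (fun ω => (g ω, k ω)) (b, c) *
              pmap p (fun ω => (f ω, k ω)) (a, c) / pmap p k c := Finset.sum_comm
        _ = ∑ c, (∑ b, pmap p (fun ω => (g ω, k ω)) (b, c)) *
              ((∑ a, pmap p (fun ω => (f ω, k ω)) (a, c)) / pmap p k c) := by
            refine Finset.sum_congr rfl fun c _ => ?_
            calc (∑ a, ∑ b, pmap p (fun ω => (g ω, k ω)) (b, c) *
                  pmap p (fun ω => (f ω, k ω)) (a, c) / pmap p k c)
                = ∑ a, (∑ b, pmap p (fun ω => (g ω, k ω)) (b, c)) *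
                  (pmap p (fun ω => (f ω, k ω)) (a, c) / pmap p k c) := by
                  refine Finset.sum_congr rfl fun a _ => ?_
                  rw [Finset.sum_mul]
                  exact Finset.sum_congr rfl fun b _ => (mul_div_assoc _ _ _)
              _ = (∑ b, pmap p (fun ω => (g ω, k ω)) (b, c)) *
                  ∑ a, pmap p (fun ω => (f ω, k ω)) (a, c) / pmap p k c := by
                  rw [Finset.mul_sum]
              _ = _ := by rw [← Finset.sum_div]
    rw [e3]
    have e4 : ∀ c : C, (∑ b, pmap p (fun ω => (g ω, k ω)) (b, c)) *
        ((∑ a, pmap p (fun ω => (f ω, k ω)) (a, c)) / pmap p k c) ≤ pmap p k c := by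
      intro c
      rw [← pmap_pair_snd g k c, ← pmap_pair_snd f k c]
      by_cases hc : pmap p k c = 0
      · rw [hc]
        simp
      · rw [div_self hc, mul_one]
    refine le_trans (Finset.sum_le_sum fun c _ => e4 c) ?_
    rw [pmap_total, hp.2]
  have hsum2 : (0:ℝ) ≤ (∑ ω, p ω) - ∑ ω, p ω *
      (pmap p (fun ω => (g ω, k ω)) (g ω, k ω) * pmap p (fun ω => (f ω, k ω)) (f ω, k ω) /
        (pmap p k (k ω) * pmap p (fun ω => (f ω, g ω, k ω)) (f ω, g ω, k ω))) := by
    rw [hp.2]; linarith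
  calc (0:ℝ) ≤ ∑ ω, (p ω - p ω *
      (pmap p (fun ω => (g ω, k ω)) (g ω, k ω) * pmap p (fun ω => (f ω, k ω)) (f ω, k ω) /
        (pmap p k (k ω) * pmap p (fun ω => (f ω, g ω, k ω)) (f ω, g ω, k ω)))) := by
        rw [Finset.sum_sub_distrib]; exact hsum2
    _ ≤ _ := Finset.sum_le_sum fun ω _ => key ω

end Gibbs3
section Comp4

theorem sum_if_const {α : Type*} [Fintype α] {c : Prop} [Decidable c] (f : α → ℝ) :
    (∑ i, if c then f i else 0) = if c then ∑ i, f i else 0 := by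
  split <;> simp

theorem sum_if_dep {α : Type*} [Fintype α] {c : Prop} [Decidable c] {d : α → Decidable c}
    (f : α → ℝ) : (∑ i, @ite ℝ c (d i) (f i) 0) = if c then ∑ i, f i else 0 := by
  by_cases hc : c <;> simp [hc]

theorem if_pair {α β : Type*} [DecidableEq α] [DecidableEq β] (a a' : α) (b b' : β) (r : ℝ) :
    (if (a, b) = (a', b') then r else 0) = if a = a' then (if b = b' then r else 0) else 0 := by
  by_cases h1 : a = a' <;> by_cases h2 : b = b' <;> simp [h1, h2]

variable {Y X H N : Type*} [Fintype Y] [Fintype X] [Fintype H] [Fintype N]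
  [DecidableEq Y] [DecidableEq X] [DecidableEq H] [DecidableEq N]
  (q : Y × X × H × N → ℝ)

theorem pmap4_123 (y : Y) (x : X) (h : H) :
    pmap q (fun ω => (ω.1, ω.2.1, ω.2.2.1)) (y, x, h) = ∑ i, q (y, x, h, i) := by
  unfold pmap
  simp only [Fintype.sum_prod_type, if_pair]
  try dsimp only
  try simp only [sum_if_const]
  simp [Finset.sum_ite_eq, Finset.sum_ite_eq', sum_if_dep]

theorem pmap4_ry (i : N) (y : Y) :
    pmap q (fun ω => (ω.2.2.2, ω.1)) (i, y) = ∑ x, ∑ h, q (y, x, h, i) := by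
  unfold pmap
  simp only [Fintype.sum_prod_type, if_pair]
  try dsimp only
  try simp only [sum_if_const]
  simp [Finset.sum_ite_eq, Finset.sum_ite_eq', sum_if_dep]

theorem pmap4_rx (i : N) (x : X) :
    pmap q (fun ω => (ω.2.2.2, ω.2.1)) (i, x) = ∑ y, ∑ h, q (y, x, h, i) := by
  unfold pmap
  simp only [Fintype.sum_prod_type, if_pair]
  try dsimp only
  try simp only [sum_if_const]
  simp [Finset.sum_ite_eq, Finset.sum_ite_eq', sum_if_dep]

theorem pmap4_x (x : X) :
    pmap q (fun ω => ω.2.1) x = ∑ y, ∑ h, ∑ i, q (y, x, h, i) := by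
  unfold pmap
  simp only [Fintype.sum_prod_type, if_pair]
  try dsimp only
  try simp only [sum_if_const]
  simp [Finset.sum_ite_eq, Finset.sum_ite_eq', sum_if_dep]

theorem pmap4_r (i : N) :
    pmap q (fun ω => ω.2.2.2) i = ∑ y, ∑ x, ∑ h, q (y, x, h, i) := by
  unfold pmap
  simp only [Fintype.sum_prod_type, if_pair]
  try dsimp only
  try simp only [sum_if_const]
  simp [Finset.sum_ite_eq, Finset.sum_ite_eq', sum_if_dep]

theorem pmap4_y (y : Y) :
    pmap q (fun ω => ω.1) y = ∑ x, ∑ h, ∑ i, q (y, x, h, i) := by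
  unfold pmap
  simp only [Fintype.sum_prod_type, if_pair]
  try dsimp only
  try simp only [sum_if_const]
  simp [Finset.sum_ite_eq, Finset.sum_ite_eq', sum_if_dep]

theorem pmap4_full (y : Y) (x : X) (h : H) (i : N) :
    pmap q (fun ω => (ω.2.2.1, (ω.1, ω.2.2.2), ω.2.1)) (h, (y, i), x) = q (y, x, h, i) := by
  unfold pmap
  simp only [Fintype.sum_prod_type, if_pair]
  try dsimp only
  try simp only [sum_if_const]
  simp [Finset.sum_ite_eq, Finset.sum_ite_eq', sum_if_dep]

theorem pmap4_hx (h : H) (x : X) :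
    pmap q (fun ω => (ω.2.2.1, ω.2.1)) (h, x) = ∑ y, ∑ i, q (y, x, h, i) := by
  unfold pmap
  simp only [Fintype.sum_prod_type, if_pair]
  try dsimp only
  try simp only [sum_if_const]
  simp [Finset.sum_ite_eq, Finset.sum_ite_eq', sum_if_dep]

theorem pmap4_yrx (y : Y) (i : N) (x : X) :
    pmap q (fun ω => ((ω.1, ω.2.2.2), ω.2.1)) ((y, i), x) = ∑ h, q (y, x, h, i) := by
  unfold pmap
  simp only [Fintype.sum_prod_type, if_pair]
  try dsimp only
  try simp only [sum_if_const]
  simp [Finset.sum_ite_eq, Finset.sum_ite_eq', sum_if_dep]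

theorem pmap3_12 {p3 : Y × X × H → ℝ} (y : Y) (x : X) :
    pmap p3 (fun a => (a.1, a.2.1)) (y, x) = ∑ h, p3 (y, x, h) := by
  unfold pmap
  simp only [Fintype.sum_prod_type, if_pair]
  try dsimp only
  try simp only [sum_if_const]
  simp [Finset.sum_ite_eq, Finset.sum_ite_eq', sum_if_dep]

theorem pmap3_1 {p3 : Y × X × H → ℝ} (y : Y) :
    pmap p3 (fun a => a.1) y = ∑ x, ∑ h, p3 (y, x, h) := by
  unfold pmap
  simp only [Fintype.sum_prod_type, if_pair]
  try dsimp only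
  try simp only [sum_if_const]
  simp [Finset.sum_ite_eq, Finset.sum_ite_eq', sum_if_dep]

end Comp4
section Construction
variable {Y X H : Type*} [Fintype Y] [Fintype X] [Fintype H]
  [DecidableEq Y] [DecidableEq X] [DecidableEq H]

/-- Conditional distribution of `x` given `y` (uniform fallback off the support). -/
noncomputable def Pc (p3 : Y × X × H → ℝ) (y : Y) (x : X) : ℝ :=
  if pmap p3 (fun a => a.1) y = 0 then (Fintype.card X : ℝ)⁻¹
  else pmap p3 (fun a => (a.1, a.2.1)) (y, x) / pmap p3 (fun a => a.1) y

/-- Conditional distribution of the random function `φ` given `(y, x)`. -/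
noncomputable def wt (p3 : Y × X × H → ℝ) (y : Y) (x : X) (φ : Y → X) : ℝ :=
  if φ y = x then ∏ y' ∈ Finset.univ.erase y, Pc p3 y' (φ y') else 0

/-- The enlarged joint distribution realizing the functional representation. -/
noncomputable def qc (p3 : Y × X × H → ℝ) {n : ℕ} (e : Fin n ≃ (Y → X)) :
    Y × X × H × Fin n → ℝ :=
  fun ω => p3 (ω.1, ω.2.1, ω.2.2.1) * wt p3 ω.1 ω.2.1 (e ω.2.2.2)

variable {p3 : Y × X × H → ℝ}

theorem Pc_nonneg (hp3 : ∀ a, 0 ≤ p3 a) (y : Y) (x : X) : 0 ≤ Pc p3 y x := by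
  unfold Pc
  split
  · positivity
  · exact div_nonneg (pmap_nonneg hp3 _ _) (pmap_nonneg hp3 _ _)

theorem p2_marg (y : Y) :
    ∑ x, pmap p3 (fun a => (a.1, a.2.1)) (y, x) = pmap p3 (fun a => a.1) y := by
  rw [pmap3_1]
  exact Finset.sum_congr rfl fun x _ => pmap3_12 y x

theorem Pc_sum (hX : Nonempty X) (y : Y) : ∑ x, Pc p3 y x = 1 := by
  unfold Pc
  split
  · rw [Finset.sum_const]
    simp
  · rw [← Finset.sum_div, p2_marg y, div_self ‹_›]

theorem wt_nonneg (hp3 : ∀ a, 0 ≤ p3 a) (y : Y) (x : X) (φ : Y → X) : 0 ≤ wt p3 y x φ := by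
  unfold wt
  split
  · exact Finset.prod_nonneg fun y' _ => Pc_nonneg hp3 y' (φ y')
  · exact le_refl 0

theorem wt_eq_prod (y : Y) (x : X) (φ : Y → X) :
    wt p3 y x φ =
    ∏ y', (if y' = y then (if φ y' = x then (1:ℝ) else 0) else Pc p3 y' (φ y')) := by
  rw [← Finset.mul_prod_erase Finset.univ _ (Finset.mem_univ y)]
  have herase : (∏ y' ∈ Finset.univ.erase y,
      (if y' = y then (if φ y' = x then (1:ℝ) else 0) else Pc p3 y' (φ y'))) =
      ∏ y' ∈ Finset.univ.erase y, Pc p3 y' (φ y') :=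
    Finset.prod_congr rfl fun y' hy' => if_neg (Finset.ne_of_mem_erase hy')
  rw [herase, if_pos rfl]
  unfold wt
  by_cases h : φ y = x
  · rw [if_pos h, if_pos h, one_mul]
  · rw [if_neg h, if_neg h, zero_mul]

theorem wt_sum (hX : Nonempty X) (y : Y) (x : X) : ∑ φ : Y → X, wt p3 y x φ = 1 := by
  have h1 : ∑ φ : Y → X, wt p3 y x φ = ∑ φ : Y → X,
      ∏ y', (if y' = y then (if φ y' = x then (1:ℝ) else 0) else Pc p3 y' (φ y')) :=
    Finset.sum_congr rfl fun φ _ => wt_eq_prod y x φ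
  rw [h1]
  have h2 : (∑ φ : Y → X,
      ∏ y', (if y' = y then (if φ y' = x then (1:ℝ) else 0) else Pc p3 y' (φ y'))) =
      ∏ y', ∑ x', (if y' = y then (if x' = x then (1:ℝ) else 0) else Pc p3 y' x') :=
    (Fintype.prod_sum fun y' x' =>
      (if y' = y then (if x' = x then (1:ℝ) else 0) else Pc p3 y' x')).symm
  rw [h2]
  apply Finset.prod_eq_one
  intro y' _
  by_cases h : y' = y
  · simp [h, Finset.sum_ite_eq']
  · simp only [if_neg h]
    exact Pc_sum hX y'

theorem wt_sum_fin (hX : Nonempty X) {n : ℕ} (e : Fin n ≃ (Y → X)) (y : Y) (x : X) :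
    ∑ i : Fin n, wt p3 y x (e i) = 1 := by
  rw [Equiv.sum_comp e (wt p3 y x)]
  exact wt_sum hX y x

theorem qc_nonneg (hp3 : ∀ a, 0 ≤ p3 a) {n : ℕ} (e : Fin n ≃ (Y → X)) (ω : Y × X × H × Fin n) :
    0 ≤ qc p3 e ω :=
  mul_nonneg (hp3 _) (wt_nonneg hp3 _ _ _)

theorem qc_marg (hX : Nonempty X) {n : ℕ} (e : Fin n ≃ (Y → X)) (y : Y) (x : X) (h : H) :
    pmap (qc p3 e) (fun ω => (ω.1, ω.2.1, ω.2.2.1)) (y, x, h) = p3 (y, x, h) := by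
  rw [pmap4_123]
  unfold qc
  dsimp only
  rw [← Finset.mul_sum, wt_sum_fin hX e y x, mul_one]

theorem qc_pmf (hp3 : IsPMF p3) (hX : Nonempty X) {n : ℕ} (e : Fin n ≃ (Y → X)) :
    IsPMF (qc p3 e) := by
  constructor
  · exact qc_nonneg hp3.1 e
  · rw [← pmap_total (p := qc p3 e) (fun ω => (ω.1, ω.2.1, ω.2.2.1))]
    rw [show (∑ a : Y × X × H, pmap (qc p3 e) (fun ω => (ω.1, ω.2.1, ω.2.2.1)) a) =
        ∑ a : Y × X × H, p3 a from Finset.sum_congr rfl fun a _ => by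
          rw [show a = (a.1, a.2.1, a.2.2) from rfl]; exact qc_marg hX e a.1 a.2.1 a.2.2]
    exact hp3.2

theorem p2_le_pY (hp3 : ∀ a, 0 ≤ p3 a) (y : Y) (x : X) :
    pmap p3 (fun a => (a.1, a.2.1)) (y, x) ≤ pmap p3 (fun a => a.1) y := by
  rw [← p2_marg y]
  exact Finset.single_le_sum (f := fun x' => pmap p3 (fun a => (a.1, a.2.1)) (y, x'))
    (fun x' _ => pmap_nonneg hp3 _ _) (Finset.mem_univ x)

theorem q_ry (hp3 : IsPMF p3) {n : ℕ} (e : Fin n ≃ (Y → X)) (i : Fin n) (y : Y) :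
    pmap (qc p3 e) (fun ω => (ω.2.2.2, ω.1)) (i, y) =
    pmap p3 (fun a => a.1) y * ∏ y', Pc p3 y' (e i y') := by
  rw [pmap4_ry]
  unfold qc
  dsimp only
  have step1 : ∀ x, (∑ h, p3 (y, x, h) * wt p3 y x (e i)) =
      pmap p3 (fun a => (a.1, a.2.1)) (y, x) * wt p3 y x (e i) := by
    intro x
    rw [pmap3_12, Finset.sum_mul]
  rw [Finset.sum_congr rfl (fun x _ => step1 x)]
  unfold wt
  rw [Finset.sum_eq_single (e i y)]
  · rw [if_pos rfl, ← Finset.mul_prod_erase Finset.univ _ (Finset.mem_univ y), ← mul_assoc]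
    congr 1
    unfold Pc
    by_cases h0 : pmap p3 (fun a => a.1) y = 0
    · rw [if_pos h0, h0, zero_mul]
      have hle := p2_le_pY hp3.1 y (e i y)
      have hge := pmap_nonneg hp3.1 (fun a => (a.1, a.2.1)) (y, e i y)
      linarith
    · rw [if_neg h0]
      field_simp
  · intro x _ hx
    rw [if_neg (fun hh => hx hh.symm), mul_zero]
  · simp

theorem pY_total (hp3 : IsPMF p3) : ∑ y, pmap p3 (fun a => a.1) y = 1 := by
  rw [pmap_total]; exact hp3.2

theorem q_r (hp3 : IsPMF p3) {n : ℕ} (e : Fin n ≃ (Y → X)) (i : Fin n) :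
    pmap (qc p3 e) (fun ω => ω.2.2.2) i = ∏ y', Pc p3 y' (e i y') := by
  rw [pmap4_r]
  have h1 : ∀ y, (∑ x, ∑ h, qc p3 e (y, x, h, i)) =
      pmap p3 (fun a => a.1) y * ∏ y', Pc p3 y' (e i y') := by
    intro y
    rw [← q_ry hp3 e i y, pmap4_ry]
  rw [Finset.sum_congr rfl fun y _ => h1 y, ← Finset.sum_mul, pY_total hp3, one_mul]

theorem q_y (hX : Nonempty X) {n : ℕ} (e : Fin n ≃ (Y → X)) (y : Y) :
    pmap (qc p3 e) (fun ω => ω.1) y = pmap p3 (fun a => a.1) y := by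
  rw [pmap4_y, pmap3_1]
  refine Finset.sum_congr rfl fun x _ => Finset.sum_congr rfl fun h _ => ?_
  unfold qc
  dsimp only
  rw [← Finset.mul_sum, wt_sum_fin hX e y x, mul_one]

theorem nu_total (hX : Nonempty X) {n : ℕ} (e : Fin n ≃ (Y → X)) :
    ∑ i : Fin n, ∏ y', Pc p3 y' (e i y') = 1 := by
  rw [Equiv.sum_comp e (fun φ => ∏ y', Pc p3 y' (φ y'))]
  rw [show (∑ φ : Y → X, ∏ y', Pc p3 y' (φ y')) = ∏ y', ∑ x', Pc p3 y' x' from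
    (Fintype.prod_sum fun y' x' => Pc p3 y' x').symm]
  exact Finset.prod_eq_one fun y' _ => Pc_sum hX y'

theorem condindep_of_fact {N' : Type*} [Fintype N'] [DecidableEq N']
    {q : Y × X × H × N' → ℝ} {A : X → H → ℝ} {B : X → Y × N' → ℝ}
    (hfact : ∀ y x h i, q (y, x, h, i) = A x h * B x (y, i)) :
    CondIndep q (fun ω => ω.2.2.1) (fun ω => (ω.1, ω.2.2.2)) (fun ω => ω.2.1) := by
  intro a b c
  obtain ⟨yb, ib⟩ := b
  rw [pmap4_full, pmap4_x, pmap4_hx, pmap4_yrx]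
  simp only [hfact]
  have s1 : (∑ y, ∑ h, ∑ i, A c h * B c (y, i)) =
      (∑ h, A c h) * (∑ y, ∑ i, B c (y, i)) := by
    rw [Finset.mul_sum]
    refine Finset.sum_congr rfl fun y _ => ?_
    rw [Finset.sum_mul]
    refine Finset.sum_congr rfl fun h _ => ?_
    rw [Finset.mul_sum]
  have s2 : (∑ y, ∑ i, A c a * B c (y, i)) = A c a * ∑ y, ∑ i, B c (y, i) := by
    rw [Finset.mul_sum]
    refine Finset.sum_congr rfl fun y _ => ?_
    rw [Finset.mul_sum]
  have s3 : (∑ h, A c h * B c (yb, ib)) = (∑ h, A c h) * B c (yb, ib) := by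
    rw [Finset.sum_mul]
  rw [s1, s2, s3]
  ring

end Construction
section FinalAux
variable {Ω Ω' A B T : Type*} [Fintype Ω] [Fintype Ω'] [Fintype A] [Fintype B] [Fintype T]
  [DecidableEq A] [DecidableEq B] [DecidableEq T]

theorem mi_zero_of_indep {q : Ω → ℝ} (hq : IsPMF q) (f : Ω → A) (g : Ω → B)
    (hind : ∀ a b, pmap q (fun ω => (f ω, g ω)) (a, b) = pmap q f a * pmap q g b) :
    MI q f g = 0 := by
  unfold MI
  have h1 : pmap q (fun ω => (f ω, g ω)) = fun x : A × B => pmap q f x.1 * pmap q g x.2 :=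
    funext fun x => hind x.1 x.2
  rw [h1, ent_prod (by rw [pmap_total, hq.2]) (by rw [pmap_total, hq.2])]
  ring

theorem ent_pair_eq_of_indep {q : Ω → ℝ} (hq : IsPMF q) (f : Ω → A) (g : Ω → B)
    (hind : ∀ a b, pmap q (fun ω => (f ω, g ω)) (a, b) = pmap q f a * pmap q g b) :
    ent (pmap q (fun ω => (f ω, g ω))) = ent (pmap q f) + ent (pmap q g) := by
  have h1 : pmap q (fun ω => (f ω, g ω)) = fun x : A × B => pmap q f x.1 * pmap q g x.2 :=
    funext fun x => hind x.1 x.2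
  rw [h1, ent_prod (by rw [pmap_total, hq.2]) (by rw [pmap_total, hq.2])]

theorem pmap_trans_of_marg {q : Ω → ℝ} {p' : Ω' → ℝ} (t1 : Ω → T) (t2 : Ω' → T)
    (h : pmap q t1 = pmap p' t2) (F : T → A) :
    pmap q (fun ω => F (t1 ω)) = pmap p' (fun ω => F (t2 ω)) := by
  rw [← pmap_comp t1 F, ← pmap_comp t2 F, h]

end FinalAux

/-- Proposition 2: `r*` is an optimal nuisance (it is a nuisance, and no
other nuisance `r` — on any enlargement of the probability space consistent with the
`(y, x, h)`-marginal and the Markov chain — carries more information about `h`).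
If `y` is a deterministic function of `x`, then for any `λ₂ ≥ 0` the gap
`ε = λ₂[I(h; x) − I(h; y) − I(h; r*)]` satisfies `ε ≤ λ₂[I(x; y) − I(h; y)]`. -/
theorem stmt8 {Y X H R : Type*} [Fintype Y] [Fintype X] [Fintype H] [Fintype R]
    [DecidableEq Y] [DecidableEq X] [DecidableEq H] [DecidableEq R]
    (p : Y × X × H × R → ℝ) (hp : IsPMF p) (g : X → Y)
    (hy : ∀ ω, p ω ≠ 0 → ω.1 = g ω.2.1)
    (hmarkov : CondIndep p (fun ω => ω.2.2.1) (fun ω => (ω.1, ω.2.2.2)) (fun ω => ω.2.1))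
    (hnuisX : 0 < MI p (fun ω => ω.2.2.2) (fun ω => ω.2.1))
    (hnuisY : MI p (fun ω => ω.2.2.2) (fun ω => ω.1) = 0)
    (hopt : ∀ (n : ℕ) (q : Y × X × H × Fin n → ℝ), IsPMF q →
      (∀ a : Y × X × H, pmap q (fun ω => (ω.1, ω.2.1, ω.2.2.1)) a =
        pmap p (fun ω => (ω.1, ω.2.1, ω.2.2.1)) a) →
      CondIndep q (fun ω => ω.2.2.1) (fun ω => (ω.1, ω.2.2.2)) (fun ω => ω.2.1) →
      0 < MI q (fun ω => ω.2.2.2) (fun ω => ω.2.1) →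
      MI q (fun ω => ω.2.2.2) (fun ω => ω.1) = 0 →
      MI q (fun ω => ω.2.2.2) (fun ω => ω.2.2.1) ≤
        MI p (fun ω => ω.2.2.2) (fun ω => ω.2.2.1))
    (lam2 : ℝ) (hlam2 : 0 ≤ lam2) :
    lam2 * (MI p (fun ω => ω.2.2.1) (fun ω => ω.2.1) -
        MI p (fun ω => ω.2.2.1) (fun ω => ω.1) -
        MI p (fun ω => ω.2.2.2) (fun ω => ω.2.2.1)) ≤
      lam2 * (MI p (fun ω => ω.2.1) (fun ω => ω.1) -
        MI p (fun ω => ω.2.2.1) (fun ω => ω.1)) := by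
  have hX : Nonempty X := by
    by_contra hc
    rw [not_nonempty_iff] at hc
    have hemp : IsEmpty (Y × X × H × R) := ⟨fun ω => hc.false ω.2.1⟩
    have h0 := hp.2
    rw [@Finset.univ_eq_empty _ _ hemp, Finset.sum_empty] at h0
    exact one_ne_zero h0.symm
  set p3 : Y × X × H → ℝ := pmap p (fun ω => (ω.1, ω.2.1, ω.2.2.1)) with hp3def
  have hp3 : IsPMF p3 := ⟨pmap_nonneg hp.1 _, by rw [hp3def, pmap_total]; exact hp.2⟩
  have hsupp3 : ∀ a : Y × X × H, p3 a ≠ 0 → a.1 = g a.2.1 := by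
    intro a ha
    rw [hp3def] at ha
    obtain ⟨ω, hω, hfa⟩ := exists_of_pmap_ne_zero ha
    rw [← hfa]
    exact hy ω hω
  set n := Fintype.card (Y → X) with hndef
  set e : Fin n ≃ (Y → X) := (Fintype.equivFin (Y → X)).symm with hedef
  have hq : IsPMF (qc p3 e) := qc_pmf hp3 hX e
  have hqp : pmap (qc p3 e) (fun ω => (ω.1, ω.2.1, ω.2.2.1)) =
      pmap p (fun ω => (ω.1, ω.2.1, ω.2.2.1)) := by
    funext a
    rw [show a = (a.1, a.2.1, a.2.2) from rfl, qc_marg hX e a.1 a.2.1 a.2.2, hp3def]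
  have hmarg : ∀ a : Y × X × H, pmap (qc p3 e) (fun ω => (ω.1, ω.2.1, ω.2.2.1)) a =
      pmap p (fun ω => (ω.1, ω.2.1, ω.2.2.1)) a := fun a => by rw [hqp]
  have hqsupp : ∀ ω : Y × X × H × Fin n, qc p3 e ω ≠ 0 →
      ω.1 = g ω.2.1 ∧ e ω.2.2.2 ω.1 = ω.2.1 := by
    intro ω hω
    have hfac : qc p3 e ω = p3 (ω.1, ω.2.1, ω.2.2.1) * wt p3 ω.1 ω.2.1 (e ω.2.2.2) := rfl
    rw [hfac] at hω
    obtain ⟨h1, h2⟩ := mul_ne_zero_iff.mp hω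
    refine ⟨hsupp3 _ h1, ?_⟩
    by_contra hc
    apply h2
    unfold wt
    rw [if_neg hc]
  have hcond : CondIndep (qc p3 e) (fun ω => ω.2.2.1) (fun ω => (ω.1, ω.2.2.2))
      (fun ω => ω.2.1) := by
    apply condindep_of_fact (A := fun x h => p3 (g x, x, h))
      (B := fun x b => if b.1 = g x then wt p3 b.1 x (e b.2) else 0)
    intro y x h i
    by_cases hyx : y = g x
    · subst hyx
      dsimp only
      rw [if_pos rfl]
      rfl
    · dsimp only
      rw [if_neg hyx, mul_zero]
      have hz : p3 (y, x, h) = 0 := by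
        by_contra hne
        exact hyx (hsupp3 (y, x, h) hne)
      show p3 (y, x, h) * wt p3 y x (e i) = 0
      rw [hz, zero_mul]
  have hind_ry : ∀ (a : Fin n) (b : Y),
      pmap (qc p3 e) (fun ω => (ω.2.2.2, ω.1)) (a, b) =
      pmap (qc p3 e) (fun ω => ω.2.2.2) a * pmap (qc p3 e) (fun ω => ω.1) b := by
    intro a b
    rw [q_ry hp3 e a b, q_r hp3 e a, q_y hX e b]
    ring
  have hMIry : MI (qc p3 e) (fun ω => ω.2.2.2) (fun ω => ω.1) = 0 :=
    mi_zero_of_indep hq _ _ hind_ry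
  have hEry : ent (pmap (qc p3 e) (fun ω => (ω.2.2.2, ω.1))) =
      ent (pmap (qc p3 e) (fun ω => ω.2.2.2)) + ent (pmap (qc p3 e) (fun ω => ω.1)) :=
    ent_pair_eq_of_indep hq _ _ hind_ry
  -- entropy reshuffling equalities
  have hE1 : ent (pmap (qc p3 e) (fun ω => ((ω.2.2.2, ω.1), ω.2.1))) =
      ent (pmap (qc p3 e) (fun ω => (ω.2.2.2, ω.1))) :=
    ent_pmap_eq Prod.fst (fun b => (b, e b.1 b.2)) (fun ω _ => rfl)
      (fun ω hω => by
        show _ = ((ω.2.2.2, ω.1), e ω.2.2.2 ω.1)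
        rw [(hqsupp ω hω).2])
  have hE2 : ent (pmap (qc p3 e) (fun ω => ((ω.2.2.2, ω.1), (ω.2.2.1, ω.2.1)))) =
      ent (pmap (qc p3 e) (fun ω => (ω.2.2.1, (ω.2.2.2, ω.1)))) :=
    ent_pmap_eq (fun z => (z.2.1, z.1)) (fun w => (w.2, (w.1, e w.2.1 w.2.2)))
      (fun ω _ => rfl)
      (fun ω hω => by
        show _ = ((ω.2.2.2, ω.1), (ω.2.2.1, e ω.2.2.2 ω.1))
        rw [(hqsupp ω hω).2])
  have hE3 : ent (pmap (qc p3 e) (fun ω => (ω.1, (ω.2.2.1, ω.2.2.2)))) =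
      ent (pmap (qc p3 e) (fun ω => (ω.2.2.1, (ω.2.2.2, ω.1)))) :=
    ent_pmap_eq (fun z => (z.2.1, (z.2.2, z.1))) (fun w => (w.2.2, (w.1, w.2.1)))
      (fun ω _ => rfl) (fun ω _ => rfl)
  have hE4 : ent (pmap (qc p3 e) (fun ω => (ω.2.2.1, ω.2.2.2))) =
      ent (pmap (qc p3 e) (fun ω => (ω.2.2.2, ω.2.2.1))) :=
    ent_pmap_eq Prod.swap Prod.swap (fun ω _ => rfl) (fun ω _ => rfl)
  have hE5 : ent (pmap (qc p3 e) (fun ω => (ω.2.1, ω.1))) =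
      ent (pmap (qc p3 e) (fun ω => ω.2.1)) := by
    refine (ent_pmap_eq (fun c => (c, g c)) Prod.fst ?_ (fun ω _ => rfl)).symm
    intro ω hω
    show (ω.2.1, ω.1) = (ω.2.1, g ω.2.1)
    rw [← (hqsupp ω hω).1]
  have hE6 : ent (pmap (qc p3 e) (fun ω => (ω.2.1, ω.2.2.1))) =
      ent (pmap (qc p3 e) (fun ω => (ω.2.2.1, ω.2.1))) :=
    ent_pmap_eq Prod.swap Prod.swap (fun ω _ => rfl) (fun ω _ => rfl)
  have hE7 : ent (pmap (qc p3 e) (fun ω => (ω.1, (ω.2.2.2, ω.2.1)))) =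
      ent (pmap (qc p3 e) (fun ω => (ω.2.2.2, ω.1))) :=
    ent_pmap_eq (fun z => (z.2.1, z.1)) (fun w => (w.2, (w.1, e w.1 w.2)))
      (fun ω _ => rfl)
      (fun ω hω => by
        show _ = (ω.1, (ω.2.2.2, e ω.2.2.2 ω.1))
        rw [(hqsupp ω hω).2])
  -- representations of MI/condEnt/condMI as entropy combinations
  have r1 : MI (qc p3 e) (fun ω => ω.2.2.1) (fun ω => ω.2.1) =
      ent (pmap (qc p3 e) (fun ω => ω.2.2.1)) + ent (pmap (qc p3 e) (fun ω => ω.2.1)) -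
      ent (pmap (qc p3 e) (fun ω => (ω.2.2.1, ω.2.1))) := rfl
  have r2 : MI (qc p3 e) (fun ω => ω.2.2.2) (fun ω => ω.2.2.1) =
      ent (pmap (qc p3 e) (fun ω => ω.2.2.2)) + ent (pmap (qc p3 e) (fun ω => ω.2.2.1)) -
      ent (pmap (qc p3 e) (fun ω => (ω.2.2.2, ω.2.2.1))) := rfl
  have r3 : MI (qc p3 e) (fun ω => ω.2.1) (fun ω => ω.1) =
      ent (pmap (qc p3 e) (fun ω => ω.2.1)) + ent (pmap (qc p3 e) (fun ω => ω.1)) -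
      ent (pmap (qc p3 e) (fun ω => (ω.2.1, ω.1))) := rfl
  have rI1 : condMI (qc p3 e) (fun ω => ω.2.2.1) (fun ω => (ω.2.2.2, ω.1))
      (fun ω => ω.2.1) =
      (ent (pmap (qc p3 e) (fun ω => ((ω.2.2.2, ω.1), ω.2.1))) -
        ent (pmap (qc p3 e) (fun ω => ω.2.1))) -
      (ent (pmap (qc p3 e) (fun ω => ((ω.2.2.2, ω.1), (ω.2.2.1, ω.2.1)))) -
        ent (pmap (qc p3 e) (fun ω => (ω.2.2.1, ω.2.1)))) := rfl
  have rI2 : condEnt (qc p3 e) (fun ω => ω.1) (fun ω => (ω.2.2.1, ω.2.2.2)) =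
      ent (pmap (qc p3 e) (fun ω => (ω.1, (ω.2.2.1, ω.2.2.2)))) -
      ent (pmap (qc p3 e) (fun ω => (ω.2.2.1, ω.2.2.2))) := rfl
  have hI1 := condMI_nonneg hq (fun ω => ω.2.2.1) (fun ω => (ω.2.2.2, ω.1)) (fun ω => ω.2.1)
  have hI2 := condEnt_nonneg hq (fun ω => ω.1) (fun ω => (ω.2.2.1, ω.2.2.2))
  -- transfers to p
  have tr_h : pmap (qc p3 e) (fun ω => ω.2.2.1) = pmap p (fun ω => ω.2.2.1) :=
    pmap_trans_of_marg _ _ hqp (fun a => a.2.2)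
  have tr_x : pmap (qc p3 e) (fun ω => ω.2.1) = pmap p (fun ω => ω.2.1) :=
    pmap_trans_of_marg _ _ hqp (fun a => a.2.1)
  have tr_y : pmap (qc p3 e) (fun ω => ω.1) = pmap p (fun ω => ω.1) :=
    pmap_trans_of_marg _ _ hqp (fun a => a.1)
  have tr_hx : pmap (qc p3 e) (fun ω => (ω.2.2.1, ω.2.1)) =
      pmap p (fun ω => (ω.2.2.1, ω.2.1)) :=
    pmap_trans_of_marg _ _ hqp (fun a => (a.2.2, a.2.1))
  have tr_xy : pmap (qc p3 e) (fun ω => (ω.2.1, ω.1)) =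
      pmap p (fun ω => (ω.2.1, ω.1)) :=
    pmap_trans_of_marg _ _ hqp (fun a => (a.2.1, a.1))
  have hMIhx_eq : MI (qc p3 e) (fun ω => ω.2.2.1) (fun ω => ω.2.1) =
      MI p (fun ω => ω.2.2.1) (fun ω => ω.2.1) := by
    unfold MI
    rw [tr_h, tr_x, tr_hx]
  have hMIxy_eq : MI (qc p3 e) (fun ω => ω.2.1) (fun ω => ω.1) =
      MI p (fun ω => ω.2.1) (fun ω => ω.1) := by
    unfold MI
    rw [tr_x, tr_y, tr_xy]
  -- the core inequality
  have hfinal : MI p (fun ω => ω.2.2.1) (fun ω => ω.2.1) ≤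
      MI p (fun ω => ω.2.1) (fun ω => ω.1) +
      MI p (fun ω => ω.2.2.2) (fun ω => ω.2.2.1) := by
    by_cases hind_rx : Indep (qc p3 e) (fun ω => ω.2.2.2) (fun ω => ω.2.1)
    · -- degenerate branch
      have hErx : ent (pmap (qc p3 e) (fun ω => (ω.2.2.2, ω.2.1))) =
          ent (pmap (qc p3 e) (fun ω => ω.2.2.2)) + ent (pmap (qc p3 e) (fun ω => ω.2.1)) :=
        ent_pair_eq_of_indep hq _ _ hind_rx
      have rI3 : condEnt (qc p3 e) (fun ω => ω.1) (fun ω => (ω.2.2.2, ω.2.1)) =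
          ent (pmap (qc p3 e) (fun ω => (ω.1, (ω.2.2.2, ω.2.1)))) -
          ent (pmap (qc p3 e) (fun ω => (ω.2.2.2, ω.2.1))) := rfl
      have hI3 := condEnt_nonneg hq (fun ω => ω.1) (fun ω => (ω.2.2.2, ω.2.1))
      have rI4 : condEnt (qc p3 e) (fun ω => ω.2.1) (fun ω => ω.2.2.1) =
          ent (pmap (qc p3 e) (fun ω => (ω.2.1, ω.2.2.1))) -
          ent (pmap (qc p3 e) (fun ω => ω.2.2.1)) := rfl
      have hI4 := condEnt_nonneg hq (fun ω => ω.2.1) (fun ω => ω.2.2.1)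
      have hMIrh_nonneg := mi_nonneg hp (fun ω => ω.2.2.2) (fun ω => ω.2.2.1)
      linarith [hErx, hI3, hI4, hEry, hE5, hE6, hE7, r1, r3, rI3, rI4,
        hMIhx_eq, hMIxy_eq, hMIrh_nonneg]
    · -- main branch: apply optimality
      have hpos : 0 < MI (qc p3 e) (fun ω => ω.2.2.2) (fun ω => ω.2.1) :=
        lt_of_le_of_ne (mi_nonneg hq _ _)
          (fun h0 => hind_rx (indep_of_mi_eq_zero hq h0.symm))
      have hopt' := hopt n (qc p3 e) hq hmarg hcond hpos hMIry
      linarith [hI1, hI2, hEry, hE1, hE2, hE3, hE4, hE5, r1, r2, r3, rI1, rI2,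
        hMIhx_eq, hMIxy_eq, hopt']
  have hcore : MI p (fun ω => ω.2.2.1) (fun ω => ω.2.1) -
      MI p (fun ω => ω.2.2.1) (fun ω => ω.1) -
      MI p (fun ω => ω.2.2.2) (fun ω => ω.2.2.1) ≤
      MI p (fun ω => ω.2.1) (fun ω => ω.1) -
      MI p (fun ω => ω.2.2.1) (fun ω => ω.1) := by linarith
  exact mul_le_mul_of_nonneg_left hcore hlam2
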